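/- The deformed retarded and advanced Green's operators are formal adjoints of one another: β(Δ_⋆+(φ), ψ) = β(φ, Δ_⋆−(ψ)) for all φ, ψ ∈ A[[λ]]. -/

import Mathlib

open Finset

noncomputable section

namespace NCQFT

/-- The `ℝ[[λ]]`-linear map `V[[λ]] → W[[λ]]` induced by a family `F_(n)` of `ℝ`-linear maps,
`F_⋆ = Σ λⁿ F_(n)`, i.e. `(F_⋆ u)_(n) = Σ_{m+k=n} F_(m)(u_(k))`. -/
def starFun {V W : Type*} [AddCommGroup V] [Module ℝ V] [AddCommGroup W] [Module ℝ W]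
    (F : ℕ → V →ₗ[ℝ] W) (u : ℕ → V) : ℕ → W :=
  fun n => ∑ p ∈ antidiagonal n, F p.1 (u p.2)

variable {B : Type*} [AddCommGroup B] [Module ℝ B]

/-- `chain D Pn [j₁, …, j_k] = D ∘ P_(j₁) ∘ D ∘ P_(j₂) ∘ ⋯ ∘ D ∘ P_(j_k) ∘ D`. -/
def chain (D : B →ₗ[ℝ] B) (Pn : ℕ → B →ₗ[ℝ] B) : List ℕ → (B →ₗ[ℝ] B)
  | [] => D
  | j :: t => D ∘ₗ Pn j ∘ₗ chain D Pn t

/-- The `n`-th coefficient `Δ_(n)±` of the deformed Green's operator: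
`Δ_(n)± = Σ_{k=1}^{n} Σ_{j₁+⋯+j_k = n, jᵢ ≥ 1} (−1)^k Δ_± ∘ P_(j₁) ∘ Δ_± ∘ P_(j₂) ∘ ⋯ ∘ Δ_± ∘ P_(j_k) ∘ Δ_±`,
realized as a sum over all compositions `(j₁, …, j_k)` of `n` (for `n = 0` it equals `Δ_±`). -/
def dGreen (D : B →ₗ[ℝ] B) (Pn : ℕ → B →ₗ[ℝ] B) (n : ℕ) : B →ₗ[ℝ] B :=
  ∑ c : Composition n, ((-1 : ℝ) ^ c.blocks.length) • chain D Pn c.blocks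

end NCQFT

namespace NCQFT

/-- The `ℝ[[λ]]`-bilinear extension of a bilinear form `β : B × B → ℝ` to `B[[λ]]`. -/
def betaSeries {B : Type*} [AddCommGroup B] [Module ℝ B]
    (β : B →ₗ[ℝ] B →ₗ[ℝ] ℝ) (u v : ℕ → B) : PowerSeries ℝ :=
  PowerSeries.mk fun n => ∑ p ∈ antidiagonal n, β (u p.1) (v p.2)

section Aux

variable {B : Type*} [AddCommGroup B] [Module ℝ B]

lemma chain_append (D : B →ₗ[ℝ] B) (Pn : ℕ → B →ₗ[ℝ] B) (l : List ℕ) (j : ℕ) (v : B) :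
    chain D Pn (l ++ [j]) v = chain D Pn l (Pn j (D v)) := by
  induction l with
  | nil => simp [chain]
  | cons a t ih => simp [chain, ih]

/-- Reversal of a composition. -/
def compRev {n : ℕ} (c : Composition n) : Composition n :=
  ⟨c.blocks.reverse, fun hi => c.blocks_pos (List.mem_reverse.mp hi), by
    rw [List.sum_reverse]; exact c.blocks_sum⟩

lemma compRev_rev {n : ℕ} (c : Composition n) : compRev (compRev c) = c := by
  cases c; simp [compRev]

lemma chain_adj (A : Submodule ℝ B) (Pn : ℕ → B →ₗ[ℝ] B)
    (hPpos : ∀ n, 0 < n → ∀ u : B, Pn n u ∈ A)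
    (Dp Dm : B →ₗ[ℝ] B)
    (hPDp : ∀ a ∈ A, Pn 0 (Dp a) = a) (hPDm : ∀ a ∈ A, Pn 0 (Dm a) = a)
    (β : B →ₗ[ℝ] B →ₗ[ℝ] ℝ)
    (hβP : ∀ (n : ℕ) (u v : B), β (Pn n u) v = β u (Pn n v)) :
    ∀ (c : List ℕ), (∀ j ∈ c, 0 < j) → ∀ u ∈ A, ∀ v ∈ A,
      β (chain Dp Pn c u) v = β u (chain Dm Pn c.reverse v) := by
  have base : ∀ u ∈ A, ∀ v ∈ A, β (Dp u) v = β u (Dm v) := by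
    intro u hu v hv
    have h1 : β (Dp u) v = β (Dp u) (Pn 0 (Dm v)) := by rw [hPDm v hv]
    rw [h1, ← hβP 0, hPDp u hu]
  intro c
  induction c with
  | nil => intro _ u hu v hv; exact base u hu v hv
  | cons j t ih =>
    intro hpos u hu v hv
    have hj : 0 < j := hpos j List.mem_cons_self
    have ht : ∀ i ∈ t, 0 < i := fun i hi => hpos i (List.mem_cons_of_mem _ hi)
    have lhs : chain Dp Pn (j :: t) u = Dp (Pn j (chain Dp Pn t u)) := rfl
    rw [lhs, List.reverse_cons, chain_append,
      base _ (hPpos j hj _) v hv, hβP j]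
    exact ih ht u hu _ (hPpos j hj _)

lemma dGreen_adj (A : Submodule ℝ B) (Pn : ℕ → B →ₗ[ℝ] B)
    (hPpos : ∀ n, 0 < n → ∀ u : B, Pn n u ∈ A)
    (Dp Dm : B →ₗ[ℝ] B)
    (hPDp : ∀ a ∈ A, Pn 0 (Dp a) = a) (hPDm : ∀ a ∈ A, Pn 0 (Dm a) = a)
    (β : B →ₗ[ℝ] B →ₗ[ℝ] ℝ)
    (hβP : ∀ (n : ℕ) (u v : B), β (Pn n u) v = β u (Pn n v))
    (n : ℕ) (u v : B) (hu : u ∈ A) (hv : v ∈ A) :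
    β (dGreen Dp Pn n u) v = β u (dGreen Dm Pn n v) := by
  have hc := chain_adj A Pn hPpos Dp Dm hPDp hPDm β hβP
  calc β (dGreen Dp Pn n u) v
      = ∑ c : Composition n, ((-1 : ℝ) ^ c.blocks.length) * β (chain Dp Pn c.blocks u) v := by
        simp [dGreen, LinearMap.sum_apply, map_sum, LinearMap.smul_apply, map_smul,
          smul_eq_mul]
    _ = ∑ c : Composition n, ((-1 : ℝ) ^ c.blocks.length) *
          β u (chain Dm Pn c.blocks.reverse v) := by
        refine Finset.sum_congr rfl fun c _ => ?_
        rw [hc c.blocks (fun j hj => c.blocks_pos hj) u hu v hv]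
    _ = ∑ c : Composition n, ((-1 : ℝ) ^ c.blocks.length) * β u (chain Dm Pn c.blocks v) := by
        refine Fintype.sum_equiv ⟨compRev, compRev, compRev_rev, compRev_rev⟩ _ _ fun c => ?_
        simp [compRev]
    _ = β u (dGreen Dm Pn n v) := by
        simp [dGreen, LinearMap.sum_apply, map_sum, LinearMap.smul_apply, map_smul,
          smul_eq_mul]

end Aux

/-- the deformed retarded and advanced Green's operators are formal adjoints of
one another: `β(Δ_⋆₊(φ), ψ) = β(φ, Δ_⋆₋(ψ))` for all `φ, ψ ∈ A[[λ]]`. -/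
theorem statement_4
    {B : Type*} [AddCommGroup B] [Module ℝ B] (A : Submodule ℝ B)
    -- the family `P_(n)` (`P := P_(0)`), with `P(A) ⊆ A` and `P_(n) : B → A` for `n ≥ 1`
    (Pn : ℕ → B →ₗ[ℝ] B)
    (hPA : ∀ a ∈ A, Pn 0 a ∈ A)
    (hPpos : ∀ n, 0 < n → ∀ u : B, Pn n u ∈ A)
    -- the undeformed retarded/advanced Green's operators `Δ_±` (defined on `A`)
    (Dp Dm : B →ₗ[ℝ] B)
    (hPDp : ∀ a ∈ A, Pn 0 (Dp a) = a) (hDpP : ∀ a ∈ A, Dp (Pn 0 a) = a)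
    (hPDm : ∀ a ∈ A, Pn 0 (Dm a) = a) (hDmP : ∀ a ∈ A, Dm (Pn 0 a) = a)
    -- `β` is a symmetric bilinear form on `B`, each `P_(n)` formally self-adjoint for `β`
    (β : B →ₗ[ℝ] B →ₗ[ℝ] ℝ)
    (hβsymm : ∀ u v : B, β u v = β v u)
    (hβP : ∀ (n : ℕ) (u v : B), β (Pn n u) v = β u (Pn n v))
    (φ ψ : ℕ → B) (hφ : ∀ n, φ n ∈ A) (hψ : ∀ n, ψ n ∈ A) :
    betaSeries β (starFun (dGreen Dp Pn) φ) ψ = betaSeries β φ (starFun (dGreen Dm Pn) ψ) := by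
  have key := dGreen_adj A Pn hPpos Dp Dm hPDp hPDm β hβP
  refine PowerSeries.ext fun n => ?_
  simp only [betaSeries, PowerSeries.coeff_mk, starFun, map_sum, LinearMap.sum_apply]
  rw [Finset.sum_sigma', Finset.sum_sigma']
  refine Finset.sum_nbij' (fun x => ⟨(x.2.2, x.2.1 + x.1.2), (x.2.1, x.1.2)⟩)
    (fun x => ⟨(x.2.1 + x.1.1, x.2.2), (x.2.1, x.1.1)⟩) ?_ ?_ ?_ ?_ ?_
  · intro x hx
    simp only [Finset.mem_sigma, Finset.HasAntidiagonal.mem_antidiagonal] at hx ⊢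
    obtain ⟨h1, h2⟩ := hx
    exact ⟨by omega, trivial⟩
  · intro x hx
    simp only [Finset.mem_sigma, Finset.HasAntidiagonal.mem_antidiagonal] at hx ⊢
    obtain ⟨h1, h2⟩ := hx
    exact ⟨by omega, trivial⟩
  · intro x hx
    obtain ⟨⟨p1, p2⟩, q1, q2⟩ := x
    simp only [Finset.mem_sigma, Finset.HasAntidiagonal.mem_antidiagonal] at hx
    show (⟨(q1 + q2, p2), (q1, q2)⟩ : (_ : ℕ × ℕ) × ℕ × ℕ) = ⟨(p1, p2), (q1, q2)⟩
    rw [hx.2]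
  · intro x hx
    obtain ⟨⟨p1, p2⟩, q1, q2⟩ := x
    simp only [Finset.mem_sigma, Finset.HasAntidiagonal.mem_antidiagonal] at hx
    show (⟨(p1, q1 + q2), (q1, q2)⟩ : (_ : ℕ × ℕ) × ℕ × ℕ) = ⟨(p1, p2), (q1, q2)⟩
    rw [hx.2]
  · intro x _
    exact key x.2.1 (φ x.2.2) (ψ x.1.2) (hφ _) (hψ _)

end NCQFT
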